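/- Let n ≥ 2 and n < m ≤ 2n. If m is prime, then ψ_n(m) = √(m + √(2(m−1))); if m is not prime, then ψ_n(m) = √m. -/

import Mathlib

open Matrix BigOperators

/-- The (unordered) singular values of a complex matrix `A`: square roots of the
eigenvalues of `Aᴴ * A`. -/
noncomputable def singVals {m n : ℕ} (A : Matrix (Fin m) (Fin n) ℂ) : Fin n → ℝ :=
  fun i => Real.sqrt ((Matrix.isHermitian_conjTranspose_mul_self A).eigenvalues i)

/-- The trace norm: sum of the singular values. -/
noncomputable def traceNorm {m n : ℕ} (A : Matrix (Fin m) (Fin n) ℂ) : ℝ :=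
  ∑ i, singVals A i

/-- The Frobenius norm. -/
noncomputable def frobNorm {m n : ℕ} (A : Matrix (Fin m) (Fin n) ℂ) : ℝ :=
  Real.sqrt (∑ i, ∑ j, ‖A i j‖ ^ 2)

/-- `sigma A k` is the `k`-th largest singular value of `A` (1-indexed), `0` if out of range. -/
noncomputable def sigma {m n : ℕ} (A : Matrix (Fin m) (Fin n) ℂ) (k : ℕ) : ℝ :=
  if h : 1 ≤ k ∧ k ≤ n then
    singVals A (Tuple.sort (singVals A) ⟨n - k, by omega⟩)
  else 0

/-- Number of entries of `A` equal to `1`. -/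
noncomputable def onesCount {a b : ℕ} (A : Matrix (Fin a) (Fin b) ℂ) : ℕ := by
  classical
  exact Finset.card (Finset.univ.filter fun p : Fin a × Fin b => A p.1 p.2 = 1)

/-- Minimum trace norm of an `n × n` (0,1)-matrix with exactly `m` ones. -/
noncomputable def psi (n m : ℕ) : ℝ :=
  sInf {x | ∃ A : Matrix (Fin n) (Fin n) ℂ, (∀ i j, A i j = 0 ∨ A i j = 1) ∧
    onesCount A = m ∧ traceNorm A = x}


variable {n : ℕ}

lemma sum_eigenvalues_eq (G : Matrix (Fin n) (Fin n) ℂ) (hG : G.IsHermitian) :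
    (∑ i, (hG.eigenvalues i : ℝ)) = (G.trace).re := by
  have h := hG.spectral_theorem
  rw [Unitary.conjStarAlgAut_apply] at h
  set U := (hG.eigenvectorUnitary : Matrix (Fin n) (Fin n) ℂ) with hUdef
  set D := (diagonal (RCLike.ofReal ∘ hG.eigenvalues) : Matrix (Fin n) (Fin n) ℂ) with hDdef
  have hU : star U * U = 1 := Unitary.coe_star_mul_self _
  have : G.trace = ∑ i, ((hG.eigenvalues i : ℂ)) := by
    conv_lhs => rw [h]
    rw [Matrix.trace_mul_cycle, hU, one_mul, hDdef, Matrix.trace_diagonal]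
    rfl
  rw [this]
  simp

lemma sum_sq_eigenvalues_eq (G : Matrix (Fin n) (Fin n) ℂ) (hG : G.IsHermitian) :
    (∑ i, (hG.eigenvalues i : ℝ)^2) = ∑ j, ∑ l, Complex.normSq (G j l) := by
  have h := hG.spectral_theorem
  rw [Unitary.conjStarAlgAut_apply] at h
  set U := (hG.eigenvectorUnitary : Matrix (Fin n) (Fin n) ℂ) with hUdef
  set D := (diagonal (RCLike.ofReal ∘ hG.eigenvalues) : Matrix (Fin n) (Fin n) ℂ) with hDdef
  have hU : star U * U = 1 := Unitary.coe_star_mul_self _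
  have key : (G * G).trace = ∑ i, ((hG.eigenvalues i : ℂ))^2 := by
    conv_lhs => rw [h]
    have e1 : (U*D*star U)*(U*D*star U) = (U*D)*((star U*U)*(D*star U)) := by noncomm_ring
    have e2 : (U*D)*((1 : Matrix (Fin n) (Fin n) ℂ)*(D*star U)) = U*(D*D)*star U := by
      noncomm_ring
    rw [e1, hU, e2, Matrix.trace_mul_cycle, hU, one_mul, hDdef, diagonal_mul_diagonal,
      Matrix.trace_diagonal]
    simp [pow_two]
  have key2 : (G * G).trace = ∑ j, ∑ l, (Complex.normSq (G j l) : ℂ) := by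
    have hpt : ∀ j l : Fin n, G j l * G l j = (Complex.normSq (G j l) : ℂ) := by
      intro j l
      have hlj : G l j = starRingEnd ℂ (G j l) := by
        conv_lhs => rw [← hG]
        rw [Matrix.conjTranspose_apply]
        rfl
      rw [hlj, Complex.mul_conj]
    rw [Matrix.trace]
    simp only [Matrix.diag_apply, Matrix.mul_apply]
    exact Finset.sum_congr rfl fun j _ => Finset.sum_congr rfl fun l _ => hpt j l
  have hc : (∑ i, ((hG.eigenvalues i : ℂ))^2) = ∑ j, ∑ l, (Complex.normSq (G j l) : ℂ) := by
    rw [← key, key2]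
  have := congrArg Complex.re hc
  simpa [← Complex.ofReal_pow] using this


/-- support of column `j` -/
noncomputable def colSupp (A : Matrix (Fin n) (Fin n) ℂ) (j : Fin n) : Finset (Fin n) := by
  classical
  exact Finset.univ.filter fun i => A i j = 1

 
lemma entry_eq_card (A : Matrix (Fin n) (Fin n) ℂ) (h01 : ∀ i j, A i j = 0 ∨ A i j = 1)
    (j l : Fin n) : (Aᴴ * A) j l = ((colSupp A j ∩ colSupp A l).card : ℂ) := by
  rw [Matrix.mul_apply]
  have hpt : ∀ i : Fin n, Aᴴ j i * A i l
      = (if i ∈ colSupp A j ∩ colSupp A l then (1:ℂ) else 0) := by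
    intro i
    rw [Matrix.conjTranspose_apply]
    rcases h01 i j with h | h <;> rcases h01 i l with h' | h' <;>
      simp [h, h', colSupp, Finset.mem_inter, Finset.mem_filter]
  rw [Finset.sum_congr rfl fun i _ => hpt i, Finset.sum_boole, Finset.filter_univ_mem]

lemma onesCount_eq_sum_cols (A : Matrix (Fin n) (Fin n) ℂ) :
    onesCount A = ∑ j, (colSupp A j).card := by
  classical
  rw [onesCount]
  rw [Finset.card_filter]
  rw [← Finset.univ_product_univ, Finset.sum_product]
  rw [Finset.sum_comm]
  exact Finset.sum_congr rfl fun j _ => by rw [colSupp, Finset.card_filter]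


variable {ι α : Type*} [Fintype ι] [DecidableEq α]

lemma pointwise_bound (M T : Finset α) (hT : T.Nonempty) (hne : T ≠ M)
    (hle : T.card ≤ M.card) :
    (M.card : ℤ) + T.card - 1 ≤ 2 * ((M.card : ℤ) * T.card - ((M ∩ T).card : ℤ)^2) := by
  have hx1 : (1:ℤ) ≤ (T.card : ℤ) := by exact_mod_cast Finset.card_pos.mpr hT
  have hxs : (T.card : ℤ) ≤ (M.card : ℤ) := by exact_mod_cast hle
  have hcx : ((M ∩ T).card : ℤ) ≤ (T.card : ℤ) := by
    exact_mod_cast Finset.card_le_card (Finset.inter_subset_right : M ∩ T ⊆ T)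
  have hcs : ((M ∩ T).card : ℤ) ≤ (M.card : ℤ) := by
    exact_mod_cast Finset.card_le_card (Finset.inter_subset_left : M ∩ T ⊆ M)
  have hc0 : (0:ℤ) ≤ ((M ∩ T).card : ℤ) := Int.natCast_nonneg _
  by_cases hsub : T ⊆ M
  · have hceq : ((M ∩ T).card : ℤ) = (T.card : ℤ) := by
      congr 1
      rw [Finset.inter_eq_right.mpr hsub]
    have hnecard : (T.card : ℤ) ≠ (M.card : ℤ) := by
      intro h
      exact hne (Finset.eq_of_subset_of_card_le hsub (by exact_mod_cast h.ge))
    have hxlt : (T.card : ℤ) ≤ (M.card : ℤ) - 1 := by omega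
    nlinarith [mul_nonneg (by linarith : (0:ℤ) ≤ 2*(T.card:ℤ) - 1)
      (by linarith : (0:ℤ) ≤ (M.card:ℤ) - 1 - (T.card:ℤ))]
  · have hclt : ((M ∩ T).card : ℤ) ≤ (T.card : ℤ) - 1 := by
      have hne2 : ((M ∩ T).card : ℤ) ≠ (T.card : ℤ) := by
        intro h
        apply hsub
        have heq : M ∩ T = T := Finset.eq_of_subset_of_card_le (Finset.inter_subset_right)
          (by exact_mod_cast h.ge)
        intro a ha
        have : a ∈ M ∩ T := heq.symm ▸ ha
        exact (Finset.mem_inter.mp this).1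
      omega
    nlinarith [mul_le_mul hcs hclt hc0 (by linarith : (0:ℤ) ≤ (M.card:ℤ))]

/-- The key combinatorial inequality. -/
lemma keyCombo (S : ι → Finset α)
    (hex : ∃ a b : ι, (S a).Nonempty ∧ (S b).Nonempty ∧ S a ≠ S b) :
    (∑ j, ((S j).card : ℤ)) - 1 ≤
      ∑ j, ∑ l, (((S j).card : ℤ) * ((S l).card : ℤ) - (((S j ∩ S l).card : ℤ))^2) := by
  classical
  obtain ⟨a, b, hra, hrb, hab⟩ := hex
  obtain ⟨i₀, -, hmax⟩ := Finset.exists_max_image Finset.univ (fun j => (S j).card)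
    ⟨a, Finset.mem_univ a⟩
  set M := S i₀ with hM
  have hs1 : 1 ≤ M.card := le_trans (Finset.card_pos.mpr hra) (hmax a (Finset.mem_univ a))
  have hj₁ : ∃ j, (S j).Nonempty ∧ S j ≠ M := by
    by_cases h : S a = M
    · exact ⟨b, hrb, fun hb => hab (h.trans hb.symm)⟩
    · exact ⟨a, hra, h⟩
  obtain ⟨j₁, hj₁ne, hj₁M⟩ := hj₁
  set I := Finset.univ.filter (fun j => S j = M) with hI
  set J := Finset.univ.filter (fun j => S j ≠ M ∧ (S j).Nonempty) with hJ
  have hIJ : Disjoint I J := by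
    rw [Finset.disjoint_left]
    intro x hx hx'
    rw [hI, Finset.mem_filter] at hx
    rw [hJ, Finset.mem_filter] at hx'
    exact hx'.2.1 hx.2
  have ht1 : 1 ≤ I.card := Finset.card_pos.mpr ⟨i₀, by simp [hI, hM]⟩
  have hp1 : 1 ≤ J.card := Finset.card_pos.mpr ⟨j₁, by simp [hJ, hj₁M, hj₁ne]⟩
  set F : ι → ι → ℤ := fun j l => ((S j).card : ℤ) * ((S l).card : ℤ) - (((S j ∩ S l).card : ℤ))^2
    with hF
  have hF0 : ∀ j l, 0 ≤ F j l := by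
    intro j l
    have h1 : ((S j ∩ S l).card : ℤ) ≤ (S j).card :=
      by exact_mod_cast Finset.card_le_card Finset.inter_subset_left
    have h2 : ((S j ∩ S l).card : ℤ) ≤ (S l).card :=
      by exact_mod_cast Finset.card_le_card Finset.inter_subset_right
    simp only [hF, sub_nonneg, pow_two]
    exact mul_le_mul h1 h2 (Int.natCast_nonneg _) (Int.natCast_nonneg _)
  -- mass split
  have hmass : (∑ j, ((S j).card : ℤ)) =
      I.card * M.card + ∑ l ∈ J, ((S l).card : ℤ) := by
    rw [← Finset.sum_filter_add_sum_filter_not Finset.univ (fun j => S j = M)]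
    congr 1
    · have hcongr : ∀ j ∈ I, ((S j).card : ℤ) = (M.card : ℤ) := by
        intro j hj
        rw [hI, Finset.mem_filter] at hj
        rw [hj.2]
      rw [← hI, Finset.sum_congr rfl hcongr, Finset.sum_const, nsmul_eq_mul]
    · rw [← Finset.sum_filter_add_sum_filter_not
        (Finset.univ.filter (fun j => ¬ S j = M)) (fun j => (S j).Nonempty)]
      have hJ' : (Finset.univ.filter (fun j => ¬ S j = M)).filter (fun j => (S j).Nonempty)
          = J := by
        rw [hJ, Finset.filter_filter]
      rw [hJ']
      have hzero : ∀ j ∈ (Finset.univ.filter (fun j => ¬ S j = M)).filter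
          (fun j => ¬ (S j).Nonempty), ((S j).card : ℤ) = 0 := by
        intro j hj
        rw [Finset.mem_filter] at hj
        rw [Finset.not_nonempty_iff_eq_empty.mp hj.2]
        simp
      rw [Finset.sum_congr rfl hzero, Finset.sum_const, smul_zero, add_zero]
  have hpt : ∀ l ∈ J, (M.card : ℤ) + (S l).card - 1 ≤ 2 * F i₀ l := by
    intro l hl
    rw [hJ, Finset.mem_filter] at hl
    have := pointwise_bound M (S l) hl.2.2 hl.2.1 (hmax l (Finset.mem_univ l))
    simpa [hF, hM] using this
  have hunion_le : ∑ p ∈ (I ×ˢ J) ∪ (J ×ˢ I), F p.1 p.2 ≤ ∑ j, ∑ l, F j l := by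
    rw [← Finset.sum_product']
    apply Finset.sum_le_sum_of_subset_of_nonneg
    · intro p _; simp
    · intro p _ _; exact hF0 p.1 p.2
  have hdisj : Disjoint (I ×ˢ J) (J ×ˢ I) := by
    rw [Finset.disjoint_left]
    intro p hp hp'
    rw [Finset.mem_product] at hp hp'
    exact Finset.disjoint_left.mp hIJ hp.1 hp'.1
  have hsym : ∀ j l, F j l = F l j := by
    intro j l
    simp only [hF, Finset.inter_comm, mul_comm]
  have hIval : ∀ j ∈ I, ∀ l, F j l = F i₀ l := by
    intro j hj l
    rw [hI, Finset.mem_filter] at hj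
    simp only [hF, hj.2, ← hM]
  have hsum_union : ∑ p ∈ (I ×ˢ J) ∪ (J ×ˢ I), F p.1 p.2
      = 2 * ((I.card : ℤ) * ∑ l ∈ J, F i₀ l) := by
    rw [Finset.sum_union hdisj]
    have h1 : ∑ p ∈ I ×ˢ J, F p.1 p.2 = (I.card : ℤ) * ∑ l ∈ J, F i₀ l := by
      rw [Finset.sum_product]
      rw [Finset.sum_congr rfl (fun j hj => Finset.sum_congr rfl fun l _ => hIval j hj l)]
      rw [Finset.sum_const, nsmul_eq_mul]
    have h2 : ∑ p ∈ J ×ˢ I, F p.1 p.2 = (I.card : ℤ) * ∑ l ∈ J, F i₀ l := by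
      rw [Finset.sum_product]
      have hinner : ∀ j ∈ J, ∑ l ∈ I, F j l = (I.card : ℤ) * F i₀ j := by
        intro j hj
        have hc : ∀ l ∈ I, F j l = F i₀ j := fun l hl => (hsym j l).trans (hIval l hl j)
        rw [Finset.sum_congr rfl hc, Finset.sum_const, nsmul_eq_mul]
      rw [Finset.sum_congr rfl hinner, ← Finset.mul_sum]
    rw [h1, h2]; ring
  -- sum the pointwise bound over J
  have hsumJ : (J.card : ℤ) * M.card + (∑ l ∈ J, ((S l).card : ℤ)) - J.card
      ≤ 2 * ∑ l ∈ J, F i₀ l := by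
    have := Finset.sum_le_sum hpt
    rw [← Finset.mul_sum] at this
    refine le_trans (le_of_eq ?_) this
    rw [Finset.sum_sub_distrib, Finset.sum_add_distrib, Finset.sum_const, Finset.sum_const]
    ring
  have hJge : (J.card : ℤ) ≤ ∑ l ∈ J, ((S l).card : ℤ) := by
    have h1 : ∀ l ∈ J, (1:ℤ) ≤ ((S l).card : ℤ) := by
      intro l hl
      rw [hJ, Finset.mem_filter] at hl
      exact_mod_cast Finset.card_pos.mpr hl.2.2
    calc (J.card : ℤ) = ∑ _l ∈ J, (1:ℤ) := by rw [Finset.sum_const, nsmul_eq_mul, mul_one]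
    _ ≤ _ := Finset.sum_le_sum h1
  -- final arithmetic
  have ht1' : (1:ℤ) ≤ (I.card : ℤ) := by exact_mod_cast ht1
  have hp1' : (1:ℤ) ≤ (J.card : ℤ) := by exact_mod_cast hp1
  have hs1' : (1:ℤ) ≤ (M.card : ℤ) := by exact_mod_cast hs1
  set tz : ℤ := (I.card : ℤ) with htz
  set pz : ℤ := (J.card : ℤ) with hpz
  set sz : ℤ := (M.card : ℤ) with hsz
  set SJz : ℤ := ∑ l ∈ J, ((S l).card : ℤ) with hSJz
  have key : tz * (pz * sz + SJz - pz) ≤ ∑ j, ∑ l, F j l := by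
    calc tz * (pz * sz + SJz - pz) ≤ tz * (2 * ∑ l ∈ J, F i₀ l) := by
          apply mul_le_mul_of_nonneg_left _ (by linarith)
          calc pz * sz + SJz - pz = pz * sz + SJz - pz := rfl
          _ ≤ 2 * ∑ l ∈ J, F i₀ l := by linarith [hsumJ]
    _ = 2 * (tz * ∑ l ∈ J, F i₀ l) := by ring
    _ = ∑ p ∈ (I ×ˢ J) ∪ (J ×ˢ I), F p.1 p.2 := hsum_union.symm
    _ ≤ ∑ j, ∑ l, F j l := hunion_le
  rw [hmass]
  have harith : tz * sz + SJz - 1 ≤ tz * (pz * sz + SJz - pz) := by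
    nlinarith [mul_nonneg (by linarith : (0:ℤ) ≤ pz - 1) (by nlinarith : (0:ℤ) ≤ tz * sz - 1),
      mul_nonneg (by linarith : (0:ℤ) ≤ SJz - pz) (by linarith : (0:ℤ) ≤ tz - 1)]
  calc tz * sz + SJz - 1 ≤ tz * (pz * sz + SJz - pz) := harith
  _ ≤ _ := key

variable {n : ℕ}

/-- the set of strictly increasing pairs -/
def ltPairs (n : ℕ) : Finset (Fin n × Fin n) :=
  Finset.univ.filter fun p => p.1 < p.2

lemma sq_sum_eq (f : Fin n → ℝ) :
    (∑ i, f i)^2 = ∑ i, (f i)^2 + 2 * ∑ p ∈ ltPairs n, f p.1 * f p.2 := by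
  classical
  have h0 : (∑ i, f i)^2 = ∑ p ∈ (Finset.univ ×ˢ Finset.univ : Finset (Fin n × Fin n)),
      f p.1 * f p.2 := by
    rw [pow_two, Finset.sum_mul_sum, ← Finset.sum_product']
  rw [h0, ← Finset.sum_filter_add_sum_filter_not (Finset.univ ×ˢ Finset.univ)
    (fun p => p.1 < p.2)]
  have hP : (Finset.univ ×ˢ Finset.univ : Finset (Fin n × Fin n)).filter (fun p => p.1 < p.2)
      = ltPairs n := by
    rw [ltPairs, Finset.univ_product_univ]
  rw [hP]
  rw [← Finset.sum_filter_add_sum_filter_not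
    (((Finset.univ ×ˢ Finset.univ : Finset (Fin n × Fin n))).filter (fun p => ¬ p.1 < p.2))
    (fun p => p.2 < p.1), Finset.filter_filter, Finset.filter_filter]
  have hgt : ((Finset.univ ×ˢ Finset.univ : Finset (Fin n × Fin n))).filter
      (fun p => ¬ p.1 < p.2 ∧ p.2 < p.1) = ((Finset.univ ×ˢ Finset.univ :
        Finset (Fin n × Fin n))).filter (fun p => p.2 < p.1) := by
    apply Finset.filter_congr
    intro p _
    exact ⟨fun h => h.2, fun h => ⟨lt_asymm h, h⟩⟩
  have hdiag : ((Finset.univ ×ˢ Finset.univ : Finset (Fin n × Fin n))).filter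
      (fun p => ¬ p.1 < p.2 ∧ ¬ p.2 < p.1) = Finset.univ.image (fun i : Fin n => (i, i)) := by
    ext p
    simp only [Finset.mem_filter, Finset.mem_image, Finset.mem_product, Finset.mem_univ,
      true_and, Finset.mem_univ]
    constructor
    · rintro ⟨h1, h2⟩
      exact ⟨p.1, by
        have : p.1 = p.2 := le_antisymm (not_lt.mp h2) (not_lt.mp h1)
        rw [Prod.ext_iff]
        exact ⟨rfl, this⟩⟩
    · rintro ⟨i, rfl⟩
      simp
  have hswap : ∑ p ∈ ((Finset.univ ×ˢ Finset.univ : Finset (Fin n × Fin n))).filter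
      (fun p => p.2 < p.1), f p.1 * f p.2 = ∑ p ∈ ltPairs n, f p.1 * f p.2 := by
    apply Finset.sum_nbij' (fun p => Prod.swap p) (fun p => Prod.swap p)
    · intro p hp
      simp only [Finset.mem_filter, Finset.mem_product, Finset.mem_univ, true_and] at hp ⊢
      simp [ltPairs, hp]
    · intro p hp
      simp only [ltPairs, Finset.mem_filter, Finset.mem_univ, true_and] at hp ⊢
      simp [hp]
    · intro p _; simp
    · intro p _; simp
    · intro p _; exact mul_comm _ _
  have hdiagsum : ∑ p ∈ ((Finset.univ ×ˢ Finset.univ : Finset (Fin n × Fin n))).filter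
      (fun p => ¬ p.1 < p.2 ∧ ¬ p.2 < p.1), f p.1 * f p.2 = ∑ i, (f i)^2 := by
    rw [hdiag, Finset.sum_image (by intro x _ y _ h; simpa [Prod.ext_iff] using h)]
    exact Finset.sum_congr rfl fun i _ => (pow_two (f i)).symm
  rw [hgt, hswap, hdiagsum]
  ring

lemma sum_sq_le_sq_sum {β : Type*} (s : Finset β) (g : β → ℝ) (hg : ∀ p ∈ s, 0 ≤ g p) :
    ∑ p ∈ s, (g p)^2 ≤ (∑ p ∈ s, g p)^2 := by
  rw [pow_two, Finset.sum_mul_sum]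
  calc ∑ p ∈ s, (g p)^2 ≤ ∑ p ∈ s, (g p * ∑ q ∈ s, g q) := by
        apply Finset.sum_le_sum
        intro p hp
        rw [pow_two]
        exact mul_le_mul_of_nonneg_left (Finset.single_le_sum hg hp) (hg p hp)
  _ = _ := by simp [Finset.mul_sum]

section LowerBounds

variable {n : ℕ}

lemma singVals_nonneg (A : Matrix (Fin n) (Fin n) ℂ) (i : Fin n) : 0 ≤ singVals A i :=
  Real.sqrt_nonneg _

lemma singVals_sq (A : Matrix (Fin n) (Fin n) ℂ) (i : Fin n) :
    (singVals A i)^2 = (Matrix.isHermitian_conjTranspose_mul_self A).eigenvalues i :=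
  Real.sq_sqrt (Matrix.eigenvalues_conjTranspose_mul_self_nonneg A i)

lemma traceNorm_nonneg (A : Matrix (Fin n) (Fin n) ℂ) : 0 ≤ traceNorm A :=
  Finset.sum_nonneg fun i _ => singVals_nonneg A i

/-- Sum of eigenvalues of `Aᴴ A` equals the number of ones. -/
lemma sum_eig_eq_onesCount (A : Matrix (Fin n) (Fin n) ℂ)
    (h01 : ∀ i j, A i j = 0 ∨ A i j = 1) :
    (∑ i, (Matrix.isHermitian_conjTranspose_mul_self A).eigenvalues i) = (onesCount A : ℝ) := by
  rw [sum_eigenvalues_eq _ (Matrix.isHermitian_conjTranspose_mul_self A)]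
  have htr : (Aᴴ * A).trace = ((onesCount A : ℂ)) := by
    rw [Matrix.trace]
    have : ∀ j, (Aᴴ * A).diag j = ((colSupp A j).card : ℂ) := by
      intro j
      rw [Matrix.diag_apply, entry_eq_card A h01 j j, Finset.inter_self]
    rw [Finset.sum_congr rfl fun j _ => this j, onesCount_eq_sum_cols A]
    push_cast
    ring
  rw [htr]
  simp

/-- Sum of squared eigenvalues of `Aᴴ A` equals the sum of squared intersection cards. -/
lemma sum_eig_sq_eq (A : Matrix (Fin n) (Fin n) ℂ)
    (h01 : ∀ i j, A i j = 0 ∨ A i j = 1) :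
    (∑ i, ((Matrix.isHermitian_conjTranspose_mul_self A).eigenvalues i)^2)
      = ∑ j, ∑ l, (((colSupp A j ∩ colSupp A l).card : ℝ))^2 := by
  rw [sum_sq_eigenvalues_eq _ (Matrix.isHermitian_conjTranspose_mul_self A)]
  refine Finset.sum_congr rfl fun j _ => Finset.sum_congr rfl fun l _ => ?_
  rw [entry_eq_card A h01 j l]
  rw [Complex.normSq_natCast]
  push_cast
  ring

/-- Frobenius lower bound: `√m ≤ traceNorm A`. -/
lemma traceNorm_ge_sqrt (A : Matrix (Fin n) (Fin n) ℂ)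
    (h01 : ∀ i j, A i j = 0 ∨ A i j = 1) :
    Real.sqrt (onesCount A) ≤ traceNorm A := by
  have h1 : ((onesCount A : ℝ)) ≤ (traceNorm A)^2 := by
    rw [← sum_eig_eq_onesCount A h01, traceNorm]
    calc (∑ i, (Matrix.isHermitian_conjTranspose_mul_self A).eigenvalues i)
        = ∑ i, (singVals A i)^2 := by
          exact Finset.sum_congr rfl fun i _ => (singVals_sq A i).symm
    _ ≤ (∑ i, singVals A i)^2 := sum_sq_le_sq_sum _ _ fun i _ => singVals_nonneg A i
  calc Real.sqrt (onesCount A) ≤ Real.sqrt ((traceNorm A)^2) := Real.sqrt_le_sqrt h1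
  _ = traceNorm A := Real.sqrt_sq (traceNorm_nonneg A)

/-- In the prime case there exist two distinct nonempty column supports. -/
lemma exists_distinct_columns (A : Matrix (Fin n) (Fin n) ℂ) {m : ℕ}
    (hm : onesCount A = m) (hp : m.Prime) (h1 : n < m) :
    ∃ a b : Fin n, (colSupp A a).Nonempty ∧ (colSupp A b).Nonempty ∧
      colSupp A a ≠ colSupp A b := by
  classical
  by_contra hcon
  push_neg at hcon
  have hmsum : m = ∑ j, (colSupp A j).card := by rw [← hm, onesCount_eq_sum_cols]
  have hpos : 0 < m := hp.pos
  -- some column is nonempty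
  have hexne : ∃ j₀, (colSupp A j₀).Nonempty := by
    by_contra h
    push_neg at h
    have : ∀ j, (colSupp A j).card = 0 := fun j =>
      Finset.card_eq_zero.mpr (h j)
    rw [hmsum] at hpos
    simp [this] at hpos
  obtain ⟨j₀, hj₀⟩ := hexne
  set T := colSupp A j₀ with hT
  have hall : ∀ j, (colSupp A j).Nonempty → colSupp A j = T := fun j hj => hcon j j₀ hj hj₀
  set t := (Finset.univ.filter fun j : Fin n => (colSupp A j).Nonempty).card with htdef
  have hmeq : m = t * T.card := by
    rw [hmsum, ← Finset.sum_filter_add_sum_filter_not Finset.univ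
      (fun j : Fin n => (colSupp A j).Nonempty)]
    have hz : ∀ j ∈ Finset.univ.filter (fun j : Fin n => ¬ (colSupp A j).Nonempty),
        (colSupp A j).card = 0 := by
      intro j hj
      rw [Finset.mem_filter] at hj
      exact Finset.card_eq_zero.mpr (Finset.not_nonempty_iff_eq_empty.mp hj.2)
    rw [Finset.sum_congr rfl hz, Finset.sum_const, smul_eq_mul, mul_zero, add_zero]
    have hc : ∀ j ∈ Finset.univ.filter (fun j : Fin n => (colSupp A j).Nonempty),
        (colSupp A j).card = T.card := by
      intro j hj
      rw [Finset.mem_filter] at hj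
      rw [hall j hj.2]
    rw [Finset.sum_congr rfl hc, Finset.sum_const, smul_eq_mul]
  have hTn : T.card ≤ n := by
    calc T.card ≤ (Finset.univ : Finset (Fin n)).card := Finset.card_le_card (Finset.subset_univ T)
    _ = n := by simp
  have htn : t ≤ n := by
    calc t ≤ (Finset.univ : Finset (Fin n)).card := Finset.card_le_card (Finset.filter_subset _ _)
    _ = n := by simp
  have hdvd : T.card ∣ m := ⟨t, by rw [hmeq]; ring⟩
  rcases (Nat.Prime.eq_one_or_self_of_dvd hp _ hdvd) with h | h
  · rw [h, mul_one] at hmeq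
    omega
  · omega

/-- The prime-case lower bound. -/
lemma traceNorm_ge_prime (A : Matrix (Fin n) (Fin n) ℂ) {m : ℕ}
    (h01 : ∀ i j, A i j = 0 ∨ A i j = 1)
    (hm : onesCount A = m) (hp : m.Prime) (h1 : n < m) :
    Real.sqrt ((m : ℝ) + Real.sqrt (2 * ((m : ℝ) - 1))) ≤ traceNorm A := by
  classical
  set lam := (Matrix.isHermitian_conjTranspose_mul_self A).eigenvalues with hlam
  have hlam0 : ∀ i, 0 ≤ lam i := fun i => Matrix.eigenvalues_conjTranspose_mul_self_nonneg A i
  have hsum : ∑ i, lam i = (m : ℝ) := by rw [hlam, sum_eig_eq_onesCount A h01, hm]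
  have hm1 : (1:ℝ) ≤ (m:ℝ) := by exact_mod_cast hp.one_lt.le
  -- the combinatorial bound on the second moment
  have hcomb : (m:ℝ) - 1 ≤ (m:ℝ)^2 - ∑ i, (lam i)^2 := by
    have hZ := keyCombo (fun j => colSupp A j) (exists_distinct_columns A hm hp h1)
    have hc2 : (∑ j, ((colSupp A j).card : ℤ)) = (m : ℤ) := by
      rw [← hm, onesCount_eq_sum_cols]
      push_cast
      ring
    rw [hc2] at hZ
    have hsplit : ∑ j, ∑ l, (((colSupp A j).card : ℤ) * ((colSupp A l).card : ℤ)
        - (((colSupp A j ∩ colSupp A l).card : ℤ))^2)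
        = (m:ℤ)^2 - ∑ j, ∑ l, (((colSupp A j ∩ colSupp A l).card : ℤ))^2 := by
      rw [Finset.sum_congr rfl (fun j _ => Finset.sum_sub_distrib _ _), Finset.sum_sub_distrib]
      congr 1
      rw [← hc2, pow_two, Finset.sum_mul_sum]
    rw [hsplit] at hZ
    have heigsq : ∑ i, (lam i)^2
        = ((∑ j, ∑ l, (((colSupp A j ∩ colSupp A l).card : ℤ))^2 : ℤ) : ℝ) := by
      rw [hlam, sum_eig_sq_eq A h01]
      push_cast
      ring
    rw [heigsq]
    have : ((m:ℤ) - 1 : ℤ) ≤ (m:ℤ)^2 - ∑ j, ∑ l, (((colSupp A j ∩ colSupp A l).card : ℤ))^2 :=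
      hZ
    exact_mod_cast this
  -- pair sums
  have hTNsq : (traceNorm A)^2 = (m:ℝ) + 2 * ∑ p ∈ ltPairs n, singVals A p.1 * singVals A p.2 := by
    rw [traceNorm, sq_sum_eq]
    congr 1
    rw [← hsum]
    exact Finset.sum_congr rfl fun i _ => singVals_sq A i
  set S := ∑ p ∈ ltPairs n, singVals A p.1 * singVals A p.2 with hSdef
  have hS0 : 0 ≤ S := Finset.sum_nonneg fun p _ =>
    mul_nonneg (singVals_nonneg A p.1) (singVals_nonneg A p.2)
  have hSsq : ((m:ℝ) - 1)/2 ≤ S^2 := by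
    have h1' : ∑ p ∈ ltPairs n, (singVals A p.1 * singVals A p.2)^2 ≤ S^2 := by
      rw [hSdef]
      exact sum_sq_le_sq_sum _ _ fun p _ =>
        mul_nonneg (singVals_nonneg A p.1) (singVals_nonneg A p.2)
    have h2' : ∑ p ∈ ltPairs n, (singVals A p.1 * singVals A p.2)^2
        = ∑ p ∈ ltPairs n, lam p.1 * lam p.2 := by
      refine Finset.sum_congr rfl fun p _ => ?_
      rw [mul_pow, singVals_sq, singVals_sq]
    have h3' : (∑ i, lam i)^2 = ∑ i, (lam i)^2 + 2 * ∑ p ∈ ltPairs n, lam p.1 * lam p.2 :=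
      sq_sum_eq lam
    rw [hsum] at h3'
    have h4' : ∑ p ∈ ltPairs n, lam p.1 * lam p.2 = ((m:ℝ)^2 - ∑ i, (lam i)^2)/2 := by
      linarith
    rw [h2', h4'] at h1'
    linarith
  have hSge : Real.sqrt (((m:ℝ) - 1)/2) ≤ S := by
    calc Real.sqrt (((m:ℝ) - 1)/2) ≤ Real.sqrt (S^2) := Real.sqrt_le_sqrt hSsq
    _ = S := Real.sqrt_sq hS0
  have hsqrt2 : Real.sqrt (2 * ((m:ℝ) - 1)) = 2 * Real.sqrt (((m:ℝ) - 1)/2) := by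
    rw [show (2 * ((m:ℝ) - 1)) = (2 * Real.sqrt (((m:ℝ) - 1)/2))^2 by
      rw [mul_pow, Real.sq_sqrt (by linarith : (0:ℝ) ≤ ((m:ℝ) - 1)/2)]
      ring]
    exact Real.sqrt_sq (by positivity)
  have hfin : (m:ℝ) + Real.sqrt (2 * ((m:ℝ) - 1)) ≤ (traceNorm A)^2 := by
    rw [hTNsq, hsqrt2]
    linarith
  calc Real.sqrt ((m : ℝ) + Real.sqrt (2 * ((m : ℝ) - 1)))
      ≤ Real.sqrt ((traceNorm A)^2) := Real.sqrt_le_sqrt hfin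
  _ = traceNorm A := Real.sqrt_sq (traceNorm_nonneg A)

end LowerBounds

section Counting

variable {n : ℕ}

lemma card_filter_lt (c : ℕ) (hc : c ≤ n) :
    (Finset.univ.filter fun i : Fin n => (i : ℕ) < c).card = c := by
  have : (Finset.univ.filter fun i : Fin n => (i : ℕ) < c)
      = Finset.univ.image (Fin.castLE hc) := by
    ext x
    simp only [Finset.mem_filter, Finset.mem_univ, true_and, Finset.mem_image]
    constructor
    · intro hx
      exact ⟨⟨(x : ℕ), hx⟩, by simp [Fin.ext_iff]⟩
    · rintro ⟨y, -, rfl⟩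
      simpa using y.isLt
  rw [this, Finset.card_image_of_injective _ (Fin.castLE_injective hc)]
  simp

lemma sum_ite_lt_nat (c : ℕ) (hc : c ≤ n) :
    (∑ i : Fin n, if (i : ℕ) < c then (1:ℕ) else 0) = c := by
  rw [← Finset.sum_filter, Finset.sum_const, smul_eq_mul, mul_one, card_filter_lt c hc]

lemma sum_ite_lt_real (c : ℕ) (hc : c ≤ n) :
    (∑ i : Fin n, if (i : ℕ) < c then (1:ℝ) else 0) = c := by
  rw [← Finset.sum_filter, Finset.sum_const, nsmul_eq_mul, mul_one, card_filter_lt c hc]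

end Counting

section MomentArgs

variable {n : ℕ}

/-- If the eigenvalues are nonneg with `∑λ = m` and `∑λ² = m²`, then `∑√λ = √m`. -/
lemma moment_comp (lam : Fin n → ℝ) (m : ℕ) (hm : 0 < m) (hl0 : ∀ i, 0 ≤ lam i)
    (hsum : ∑ i, lam i = (m:ℝ)) (hsq : ∑ i, (lam i)^2 = ((m:ℝ))^2) :
    ∑ i, Real.sqrt (lam i) = Real.sqrt m := by
  have hm0 : (0:ℝ) < m := by exact_mod_cast hm
  have hzero : ∀ i ∈ Finset.univ, lam i * ((m:ℝ) - lam i) = 0 := by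
    have hsz : ∑ i, lam i * ((m:ℝ) - lam i) = 0 := by
      have : ∀ i : Fin n, lam i * ((m:ℝ) - lam i) = (m:ℝ) * lam i - (lam i)^2 := by
        intro i; ring
      rw [Finset.sum_congr rfl fun i _ => this i, Finset.sum_sub_distrib, ← Finset.mul_sum,
        hsum, hsq]
      ring
    have hnn : ∀ i ∈ Finset.univ, 0 ≤ lam i * ((m:ℝ) - lam i) := by
      intro i _
      apply mul_nonneg (hl0 i)
      have : lam i ≤ ∑ j, lam j := Finset.single_le_sum (fun j _ => hl0 j) (Finset.mem_univ i)
      rw [hsum] at this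
      linarith
    intro i hi
    exact (Finset.sum_eq_zero_iff_of_nonneg hnn).mp hsz i hi
  have hvals : ∀ i : Fin n, Real.sqrt (lam i) = lam i / Real.sqrt m := by
    intro i
    rcases mul_eq_zero.mp (hzero i (Finset.mem_univ i)) with h | h
    · rw [h]; simp
    · have : lam i = (m:ℝ) := by linarith
      rw [this, Real.div_sqrt]
  rw [Finset.sum_congr rfl fun i _ => hvals i, ← Finset.sum_div, hsum, Real.div_sqrt]

/-- If nonneg eigenvalues have at most two nonzero entries, `∑λ = 2k+1`,
`∑λ² = (2k+1)² - 2k`, then `∑√λ = √(2k+1 + 2√k)`. -/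
lemma moment_prime (lam : Fin n → ℝ) (k : ℕ) (hk : 1 ≤ k) (hl0 : ∀ i, 0 ≤ lam i)
    (hsum : ∑ i, lam i = (2*(k:ℝ)+1))
    (hsq : ∑ i, (lam i)^2 = (2*(k:ℝ)+1)^2 - 2*k)
    (hcard : (Finset.univ.filter fun i => lam i ≠ 0).card ≤ 2) :
    ∑ i, Real.sqrt (lam i) = Real.sqrt ((2*(k:ℝ)+1) + 2 * Real.sqrt k) := by
  classical
  set s := Finset.univ.filter fun i => lam i ≠ 0 with hsdef
  have hk0 : (1:ℝ) ≤ (k:ℝ) := by exact_mod_cast hk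
  have hsums : ∑ i ∈ s, lam i = (2*(k:ℝ)+1) := by
    rw [← hsum, hsdef, Finset.sum_filter_ne_zero]
  have hsqs : ∑ i ∈ s, (lam i)^2 = (2*(k:ℝ)+1)^2 - 2*k := by
    rw [← hsq]
    apply Finset.sum_subset (Finset.filter_subset _ _)
    intro x _ hx
    rw [Finset.mem_filter] at hx
    push_neg at hx
    rw [hx (Finset.mem_univ x)]
    ring
  have hsqrts : ∑ i, Real.sqrt (lam i) = ∑ i ∈ s, Real.sqrt (lam i) := by
    symm
    apply Finset.sum_subset (Finset.filter_subset _ _)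
    intro x _ hx
    rw [Finset.mem_filter] at hx
    push_neg at hx
    rw [hx (Finset.mem_univ x)]
    exact Real.sqrt_zero
  interval_cases h : s.card
  · rw [Finset.card_eq_zero] at h
    rw [h] at hsums
    simp at hsums
    nlinarith
  · rw [Finset.card_eq_one] at h
    obtain ⟨i, hi⟩ := h
    rw [hi, Finset.sum_singleton] at hsums hsqs
    nlinarith
  · rw [Finset.card_eq_two] at h
    obtain ⟨i, j, hij, hij2⟩ := h
    rw [hij2, Finset.sum_pair hij] at hsums hsqs
    rw [hsqrts, hij2, Finset.sum_pair hij]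
    have hprod : lam i * lam j = k := by nlinarith
    have hsq2 : (Real.sqrt (lam i) + Real.sqrt (lam j))^2 = (2*(k:ℝ)+1) + 2*Real.sqrt k := by
      have hij3 : Real.sqrt (lam i) * Real.sqrt (lam j) = Real.sqrt k := by
        rw [← Real.sqrt_mul (hl0 i), hprod]
      rw [add_pow_two, Real.sq_sqrt (hl0 i), Real.sq_sqrt (hl0 j), mul_assoc, hij3]
      linarith
    have h0 : 0 ≤ Real.sqrt (lam i) + Real.sqrt (lam j) := by positivity
    rw [← hsq2, Real.sqrt_sq h0]

end MomentArgs

section CompositeConstruction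

variable {n : ℕ}

/-- block matrix of ones of size a × b -/
def Cmat (n a b : ℕ) : Matrix (Fin n) (Fin n) ℂ :=
  Matrix.of fun i j => if (i : ℕ) < a ∧ (j : ℕ) < b then 1 else 0

lemma Cmat_01 (a b : ℕ) : ∀ i j, Cmat n a b i j = 0 ∨ Cmat n a b i j = 1 := by
  intro i j
  rw [Cmat]
  dsimp only [Matrix.of_apply]
  split_ifs <;> simp

lemma Cmat_colSupp (a b : ℕ) (j : Fin n) :
    colSupp (Cmat n a b) j
      = if (j : ℕ) < b then (Finset.univ.filter fun i : Fin n => (i : ℕ) < a) else ∅ := by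
  ext i
  by_cases hj : (j : ℕ) < b <;>
    simp [colSupp, Cmat, hj]

lemma Cmat_onesCount (a b : ℕ) (ha : a ≤ n) (hb : b ≤ n) :
    onesCount (Cmat n a b) = a * b := by
  rw [onesCount_eq_sum_cols]
  have hpt : ∀ j : Fin n, (colSupp (Cmat n a b) j).card
      = a * (if (j : ℕ) < b then 1 else 0) := by
    intro j
    rw [Cmat_colSupp]
    split_ifs with hj
    · rw [card_filter_lt a ha]
      ring
    · simp
  rw [Finset.sum_congr rfl fun j _ => hpt j, ← Finset.mul_sum, sum_ite_lt_nat b hb]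

lemma Cmat_traceNorm (a b : ℕ) (ha : a ≤ n) (hb : b ≤ n) (ha1 : 1 ≤ a) (hb1 : 1 ≤ b) :
    traceNorm (Cmat n a b) = Real.sqrt (a * b) := by
  have hm : 0 < a * b := Nat.mul_pos ha1 hb1
  have honce := Cmat_onesCount (n := n) a b ha hb
  have hsum : ∑ i, (Matrix.isHermitian_conjTranspose_mul_self (Cmat n a b)).eigenvalues i
      = ((a*b : ℕ) : ℝ) := by
    rw [sum_eig_eq_onesCount _ (Cmat_01 a b), honce]
  have hsq : ∑ i, ((Matrix.isHermitian_conjTranspose_mul_self (Cmat n a b)).eigenvalues i)^2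
      = (((a*b : ℕ) : ℝ))^2 := by
    rw [sum_eig_sq_eq _ (Cmat_01 a b)]
    have hps : ∀ j l : Fin n, (((colSupp (Cmat n a b) j ∩ colSupp (Cmat n a b) l).card : ℝ))^2
        = ((a:ℝ) * (if (j:ℕ) < b then (1:ℝ) else 0)) *
          ((a:ℝ) * (if (l:ℕ) < b then (1:ℝ) else 0)) := by
      intro j l
      rw [Cmat_colSupp, Cmat_colSupp]
      by_cases hj : (j:ℕ) < b <;> by_cases hl : (l:ℕ) < b <;>
        simp [hj, hl, card_filter_lt a ha] <;> ring
    rw [Finset.sum_congr rfl fun j _ => Finset.sum_congr rfl fun l _ => hps j l]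
    rw [← Finset.sum_mul_sum]
    have hone : (∑ j : Fin n, (a:ℝ) * (if (j:ℕ) < b then (1:ℝ) else 0)) = (a:ℝ) * b := by
      rw [← Finset.mul_sum, sum_ite_lt_real b hb]
    rw [hone]
    push_cast
    ring
  have := moment_comp (Matrix.isHermitian_conjTranspose_mul_self (Cmat n a b)).eigenvalues
    (a*b) hm (fun i => Matrix.eigenvalues_conjTranspose_mul_self_nonneg _ i) hsum hsq
  rw [traceNorm]
  have hsv : ∀ i : Fin n, singVals (Cmat n a b) i
      = Real.sqrt ((Matrix.isHermitian_conjTranspose_mul_self (Cmat n a b)).eigenvalues i) :=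
    fun i => rfl
  rw [Finset.sum_congr rfl fun i _ => hsv i, this]
  push_cast
  ring_nf

end CompositeConstruction

section PrimeConstruction

variable {n : ℕ}

/-- the optimal matrix for prime `m = 2k+1`: a row of `k+1` ones atop a row of `k` ones -/
def Pmat (n k : ℕ) : Matrix (Fin n) (Fin n) ℂ :=
  Matrix.of fun i j =>
    if ((i : ℕ) = 0 ∧ (j : ℕ) < k + 1) ∨ ((i : ℕ) = 1 ∧ (j : ℕ) < k) then 1 else 0

lemma Pmat_01 (k : ℕ) : ∀ i j, Pmat n k i j = 0 ∨ Pmat n k i j = 1 := by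
  intro i j
  rw [Pmat]
  dsimp only [Matrix.of_apply]
  split_ifs <;> simp

lemma Pmat_colSupp (k : ℕ) (hn : 2 ≤ n) (j : Fin n) :
    colSupp (Pmat n k) j
      = if (j : ℕ) < k then ({⟨0, by omega⟩, ⟨1, by omega⟩} : Finset (Fin n))
        else if (j : ℕ) < k + 1 then ({⟨0, by omega⟩} : Finset (Fin n)) else ∅ := by
  ext i
  by_cases hj1 : (j : ℕ) < k <;> by_cases hj2 : (j : ℕ) < k + 1 <;>
    simp [colSupp, Pmat, hj1, hj2, Fin.ext_iff] <;> omega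

lemma Pmat_onesCount (k : ℕ) (hn : 2 ≤ n) (hkn : k + 1 ≤ n) :
    onesCount (Pmat n k) = 2 * k + 1 := by
  rw [onesCount_eq_sum_cols]
  have hne : (⟨0, by omega⟩ : Fin n) ≠ ⟨1, by omega⟩ := by simp [Fin.ext_iff]
  have hpt : ∀ j : Fin n, (colSupp (Pmat n k) j).card
      = (if (j : ℕ) < k + 1 then 1 else 0) + (if (j : ℕ) < k then 1 else 0) := by
    intro j
    rw [Pmat_colSupp k hn]
    split_ifs with h1 h2 h2 <;>
      first
        | (exfalso; omega)
        | simp [Finset.card_pair hne]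
        | (rw [Finset.card_singleton]; omega)
        | simp
  rw [Finset.sum_congr rfl fun j _ => hpt j, Finset.sum_add_distrib,
    sum_ite_lt_nat (k+1) hkn, sum_ite_lt_nat k (by omega)]
  omega

lemma Pmat_traceNorm (k : ℕ) (hn : 2 ≤ n) (hk1 : 1 ≤ k) (hkn : k + 1 ≤ n) :
    traceNorm (Pmat n k) = Real.sqrt ((2*(k:ℝ)+1) + 2 * Real.sqrt k) := by
  classical
  set lam := (Matrix.isHermitian_conjTranspose_mul_self (Pmat n k)).eigenvalues with hlam
  have hl0 : ∀ i, 0 ≤ lam i := fun i => Matrix.eigenvalues_conjTranspose_mul_self_nonneg _ i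
  have hsum : ∑ i, lam i = (2*(k:ℝ)+1) := by
    rw [hlam, sum_eig_eq_onesCount _ (Pmat_01 k), Pmat_onesCount k hn hkn]
    push_cast
    ring
  -- second moment
  have hne : (⟨0, by omega⟩ : Fin n) ≠ ⟨1, by omega⟩ := by simp [Fin.ext_iff]
  have hAB : (({⟨0, by omega⟩, ⟨1, by omega⟩} : Finset (Fin n))
      ∩ ({⟨0, by omega⟩} : Finset (Fin n))) = ({⟨0, by omega⟩} : Finset (Fin n)) := by
    ext x
    simp only [Finset.mem_inter, Finset.mem_insert, Finset.mem_singleton]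
    tauto
  have hBA : (({⟨0, by omega⟩} : Finset (Fin n))
      ∩ ({⟨0, by omega⟩, ⟨1, by omega⟩} : Finset (Fin n))) = ({⟨0, by omega⟩} : Finset (Fin n)) := by
    ext x
    simp only [Finset.mem_inter, Finset.mem_insert, Finset.mem_singleton]
    tauto
  have hsq : ∑ i, (lam i)^2 = (2*(k:ℝ)+1)^2 - 2*k := by
    rw [hlam, sum_eig_sq_eq _ (Pmat_01 k)]
    have hps : ∀ j l : Fin n,
        (((colSupp (Pmat n k) j ∩ colSupp (Pmat n k) l).card : ℝ))^2
        = (if (j:ℕ) < k+1 then (1:ℝ) else 0) * (if (l:ℕ) < k+1 then (1:ℝ) else 0)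
          + (3 * (if (j:ℕ) < k then (1:ℝ) else 0)) * (if (l:ℕ) < k then (1:ℝ) else 0) := by
      intro j l
      rw [Pmat_colSupp k hn, Pmat_colSupp k hn]
      by_cases hj1 : (j:ℕ) < k <;> by_cases hj2 : (j:ℕ) < k+1 <;>
        by_cases hl1 : (l:ℕ) < k <;> by_cases hl2 : (l:ℕ) < k+1 <;>
        first
          | (exfalso; omega)
          | (simp [hj1, hj2, hl1, hl2, hAB, hBA, Finset.card_pair hne]; norm_num)
          | simp [hj1, hj2, hl1, hl2, hAB, hBA, Finset.card_pair hne]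
    rw [Finset.sum_congr rfl fun j _ => Finset.sum_congr rfl fun l _ => hps j l]
    rw [Finset.sum_congr rfl fun j _ => Finset.sum_add_distrib, Finset.sum_add_distrib,
      ← Finset.sum_mul_sum, ← Finset.sum_mul_sum]
    rw [sum_ite_lt_real (k+1) hkn]
    have h3 : (∑ j : Fin n, 3 * (if (j:ℕ) < k then (1:ℝ) else 0)) = 3 * k := by
      rw [← Finset.mul_sum, sum_ite_lt_real k (by omega)]
    rw [h3, sum_ite_lt_real k (by omega)]
    push_cast
    ring
  -- rank bound
  have hrank : (Pmat n k).rank ≤ 2 := by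
    have hfact : Pmat n k = (Matrix.of fun (i : Fin n) (t : Fin 2) =>
        if (i : ℕ) = (t : ℕ) then (1:ℂ) else 0) * (Matrix.of fun (t : Fin 2) (j : Fin n) =>
        if ((t : ℕ) = 0 ∧ (j : ℕ) < k + 1) ∨ ((t : ℕ) = 1 ∧ (j : ℕ) < k) then (1:ℂ) else 0) := by
      ext i j
      rw [Matrix.mul_apply, Fin.sum_univ_two]
      simp only [Matrix.of_apply, Pmat, Fin.val_zero, Fin.val_one]
      by_cases hi0 : (i:ℕ) = 0 <;> by_cases hi1 : (i:ℕ) = 1 <;>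
        by_cases hj1 : (j:ℕ) < k + 1 <;> by_cases hj2 : (j:ℕ) < k <;>
        simp [hi0, hi1, hj1, hj2] <;> omega
    rw [hfact]
    calc ((Matrix.of fun (i : Fin n) (t : Fin 2) =>
        if (i : ℕ) = (t : ℕ) then (1:ℂ) else 0) * _).rank
        ≤ (Matrix.of fun (i : Fin n) (t : Fin 2) =>
          if (i : ℕ) = (t : ℕ) then (1:ℂ) else 0).rank := Matrix.rank_mul_le_left _ _
    _ ≤ Fintype.card (Fin 2) := Matrix.rank_le_card_width _
    _ = 2 := by simp
  have hcard : (Finset.univ.filter fun i => lam i ≠ 0).card ≤ 2 := by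
    have h1 := (Matrix.isHermitian_conjTranspose_mul_self (Pmat n k)).rank_eq_card_non_zero_eigs
    have h2 : ((Pmat n k)ᴴ * (Pmat n k)).rank = (Pmat n k).rank := by
      open scoped ComplexOrder in
      exact Matrix.rank_conjTranspose_mul_self (Pmat n k)
    rw [h2] at h1
    rw [← Fintype.card_subtype]
    rw [← h1]
    exact hrank
  have := moment_prime lam k hk1 hl0 hsum hsq hcard
  rw [traceNorm]
  exact this

end PrimeConstruction

/-- Theorem 1 of the paper. -/
theorem stmt14 (n m : ℕ) (hn : 2 ≤ n) (h1 : n < m) (h2 : m ≤ 2 * n) :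
    (m.Prime → psi n m = Real.sqrt ((m : ℝ) + Real.sqrt (2 * ((m : ℝ) - 1)))) ∧
    (¬ m.Prime → psi n m = Real.sqrt m) := by
  have hm3 : 3 ≤ m := by omega
  have hbdd : BddBelow {x | ∃ A : Matrix (Fin n) (Fin n) ℂ, (∀ i j, A i j = 0 ∨ A i j = 1) ∧
      onesCount A = m ∧ traceNorm A = x} := by
    refine ⟨0, ?_⟩
    rintro x ⟨A, h01, hcount, rfl⟩
    exact traceNorm_nonneg A
  constructor
  · -- prime case
    intro hp
    have hne2 : m ≠ 2 := by omega
    obtain ⟨k, hk⟩ : Odd m := hp.odd_of_ne_two hne2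
    have hk1 : 1 ≤ k := by omega
    have hkn : k + 1 ≤ n := by omega
    -- the optimal value
    have hval : Real.sqrt ((2*(k:ℝ)+1) + 2 * Real.sqrt k)
        = Real.sqrt ((m : ℝ) + Real.sqrt (2 * ((m : ℝ) - 1))) := by
      have hmr : (m : ℝ) = 2*(k:ℝ)+1 := by
        rw [hk]; push_cast; ring
      have h4k : 2 * ((m:ℝ) - 1) = 4 * k := by rw [hmr]; ring
      have hsq : Real.sqrt (2 * ((m:ℝ) - 1)) = 2 * Real.sqrt k := by
        rw [h4k, show (4 * (k:ℝ)) = (2 * Real.sqrt k)^2 by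
          rw [mul_pow, Real.sq_sqrt (by positivity : (0:ℝ) ≤ (k:ℝ))]; ring]
        exact Real.sqrt_sq (by positivity)
      rw [hsq, hmr]
    have hmem : Real.sqrt ((m : ℝ) + Real.sqrt (2 * ((m : ℝ) - 1)))
        ∈ {x | ∃ A : Matrix (Fin n) (Fin n) ℂ, (∀ i j, A i j = 0 ∨ A i j = 1) ∧
          onesCount A = m ∧ traceNorm A = x} := by
      refine ⟨Pmat n k, Pmat_01 k, ?_, ?_⟩
      · rw [Pmat_onesCount k hn hkn]; omega
      · rw [Pmat_traceNorm k hn hk1 hkn, hval]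
    apply le_antisymm
    · exact csInf_le hbdd hmem
    · apply le_csInf ⟨_, hmem⟩
      rintro x ⟨A, h01, hcount, rfl⟩
      exact traceNorm_ge_prime A h01 hcount hp h1
  · -- composite case
    intro hp
    have hm1 : m ≠ 1 := by omega
    set a := m.minFac with hadef
    set b := m / a with hbdef
    have hap : a.Prime := Nat.minFac_prime hm1
    have ha2 : 2 ≤ a := hap.two_le
    have hdvd : a ∣ m := Nat.minFac_dvd m
    have hab : a * b = m := Nat.mul_div_cancel' hdvd
    have hasq : a * a ≤ m := by
      have := Nat.minFac_sq_le_self (by omega : 0 < m) hp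
      rwa [pow_two] at this
    have haleb : a ≤ b := by
      have h' : a * a ≤ a * b := by rw [hab]; exact hasq
      exact Nat.le_of_mul_le_mul_left h' (by omega)
    have h2b : 2 * b ≤ m := by
      calc 2 * b ≤ a * b := Nat.mul_le_mul_right b ha2
      _ = m := hab
    have hbn : b ≤ n := by omega
    have han : a ≤ n := le_trans haleb hbn
    have hb1 : 1 ≤ b := by
      rcases Nat.eq_zero_or_pos b with h | h
      · rw [h, mul_zero] at hab; omega
      · exact h
    have hmem : Real.sqrt (m : ℝ)
        ∈ {x | ∃ A : Matrix (Fin n) (Fin n) ℂ, (∀ i j, A i j = 0 ∨ A i j = 1) ∧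
          onesCount A = m ∧ traceNorm A = x} := by
      refine ⟨Cmat n a b, Cmat_01 a b, ?_, ?_⟩
      · rw [Cmat_onesCount a b han hbn, hab]
      · rw [Cmat_traceNorm a b han hbn (by omega) hb1]
        congr 1
        push_cast [← hab]
        ring
    apply le_antisymm
    · exact csInf_le hbdd hmem
    · apply le_csInf ⟨_, hmem⟩
      rintro x ⟨A, h01, hcount, rfl⟩
      have := traceNorm_ge_sqrt A h01
      rwa [hcount] at this
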